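/- For every H ∈ (1/4, 1/2) and every θ ∈ (0, 1/2 − H), the double integral ∫_ℝ ∫_ℝ |e^{−(x+h)²} − e^{−x²}|² |h|^{2H−2} |x|^{2θ} dh dx is finite. -/

import Mathlib

open MeasureTheory Set Real

/-!
Write `D(x, h) = e^{-(x+h)²} - e^{-x²}` and `w(y) = (1 + |y|) e^{-y²/2}`. For `|h| ≤ 1` the
mean value theorem gives `D² ≲ h² e^{-x²/2}`; for `|h| > 1` we use
`D² ≤ 2e^{-2x²} + 2e^{-2(x+h)²}` and move the weight `|x|^{2θ}` onto `x + h` at the cost of a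
factor `(1 + |h|)^{2θ}`. Hence the integrand is at most a constant times `φ(h) (w(x) + w(x + h))`
with `φ(h) = min(1, h²) |h|^{2H-2} (1 + |h|)^{2θ}`, which is integrable on `ℝ²` by the shear
`(x, h) ↦ (x + h, h)`. The function `φ` is integrable because `2H > -1` (at `0`) and
`2H - 2 + 2θ < -1` (at infinity).
-/

lemma integrable_of_even {E : Type*} [NormedAddCommGroup E] {f : ℝ → E}
    (he : ∀ x, f (-x) = f x) (h : IntegrableOn f (Ioi 0)) : Integrable f := by
  rw [← integrableOn_univ, ← Iio_union_Ici (a := (0 : ℝ)), integrableOn_union,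
    integrableOn_Ici_iff_integrableOn_Ioi]
  refine ⟨?_, h⟩
  rw [← (Measure.measurePreserving_neg (volume : Measure ℝ)).integrableOn_comp_preimage
      (Homeomorph.neg ℝ).measurableEmbedding]
  simpa only [Function.comp_def, neg_preimage, neg_Iio, neg_zero, he] using h

lemma integrable_prod_mul_add_comp_add {G : Type*} [MeasurableSpace G] [AddGroup G]
    [MeasurableAdd₂ G] {μ ν : Measure G} [SFinite μ] [SFinite ν] [μ.IsAddRightInvariant]
    {φ ψ : G → ℝ} (hφ : Integrable φ ν) (hψ : Integrable ψ μ) :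
    Integrable (fun q : G × G => φ q.2 * (ψ q.1 + ψ (q.1 + q.2))) (μ.prod ν) := by
  have hprod : Integrable (fun q : G × G => ψ q.1 * φ q.2) (μ.prod ν) := hψ.mul_prod hφ
  have hshear : Integrable (fun q : G × G => ψ (q.1 + q.2) * φ q.2) (μ.prod ν) :=
    ((measurePreserving_add_prod μ ν).integrable_comp hprod.aestronglyMeasurable).2 hprod
  refine (hprod.add hshear).congr (Filter.Eventually.of_forall fun q => ?_)
  simp only [Pi.add_apply]
  ring

lemma integrable_min_one_sq_mul_abs_rpow_mul_one_add_abs_rpow {a s : ℝ} (ha : -3 < a)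
    (hs : 0 ≤ s) (has : a + s < -1) :
    Integrable fun h : ℝ => min 1 (h ^ 2) * |h| ^ a * (1 + |h|) ^ s := by
  have hmeas : AEStronglyMeasurable (fun h : ℝ => min 1 (h ^ 2) * |h| ^ a * (1 + |h|) ^ s) :=
    by fun_prop
  refine integrable_of_even (fun h => by simp only [neg_sq, abs_neg]) ?_
  rw [← Ioo_union_Ici_eq_Ioi zero_lt_one, integrableOn_union,
    integrableOn_Ici_iff_integrableOn_Ioi]
  constructor
  · refine (((intervalIntegral.integrableOn_Ioo_rpow_iff (s := a + 2) zero_lt_one).2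
      (by linarith)).const_mul (2 ^ s)).mono' hmeas.restrict ?_
    filter_upwards [ae_restrict_mem measurableSet_Ioo] with h ⟨hh0, hh1⟩
    rw [norm_of_nonneg (by positivity), abs_of_pos hh0, min_eq_right (by nlinarith),
      rpow_add hh0, rpow_two, mul_comm (2 ^ s), mul_comm (h ^ a)]
    exact mul_le_mul_of_nonneg_left (rpow_le_rpow (by positivity) (by linarith) hs)
      (by positivity)
  · refine (((integrableOn_Ioi_rpow_iff zero_lt_one).2 has).const_mul
      (2 ^ s)).mono' hmeas.restrict ?_
    filter_upwards [ae_restrict_mem measurableSet_Ioi] with h (hh1 : 1 < h)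
    have hh0 : 0 < h := zero_lt_one.trans hh1
    rw [norm_of_nonneg (by positivity), abs_of_pos hh0, min_eq_left (by nlinarith),
      rpow_add hh0, one_mul, mul_left_comm, ← mul_rpow zero_le_two hh0.le]
    exact mul_le_mul_of_nonneg_left (rpow_le_rpow (by positivity) (by linarith) hs)
      (by positivity)

lemma abs_mul_exp_neg_sq_le (t : ℝ) : |t| * exp (-t ^ 2) ≤ exp (-t ^ 2 / 2) := by
  have hexp : |t| ≤ exp (t ^ 2 / 2) := by
    nlinarith [add_one_le_exp (t ^ 2 / 2), sq_abs t, sq_nonneg (|t| - 1)]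
  calc |t| * exp (-t ^ 2) ≤ exp (t ^ 2 / 2) * exp (-t ^ 2) := by gcongr
    _ = exp (-t ^ 2 / 2) := by rw [← exp_add]; ring_nf

lemma abs_exp_neg_sq_add_sub_le {x h : ℝ} (hh : |h| ≤ 1) :
    |exp (-(x + h) ^ 2) - exp (-x ^ 2)| ≤ 2 * exp (1 / 2 - x ^ 2 / 4) * |h| := by
  have hderiv : ∀ t ∈ Icc (x - 1) (x + 1),
      HasDerivWithinAt (fun t => exp (-t ^ 2)) (exp (-t ^ 2) * -(2 * t)) (Icc (x - 1) (x + 1)) t :=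
    fun t _ => by simpa using ((hasDerivAt_pow 2 t).neg.exp).hasDerivWithinAt
  have hbound : ∀ t ∈ Icc (x - 1) (x + 1),
      ‖exp (-t ^ 2) * -(2 * t)‖ ≤ 2 * exp (1 / 2 - x ^ 2 / 4) := by
    rintro t ⟨ht₁, ht₂⟩
    -- `x ^ 2 ≤ 2 * t ^ 2 + 2 * (x - t) ^ 2` and `|x - t| ≤ 1`
    have hsq : x ^ 2 / 2 - 1 ≤ t ^ 2 := by
      nlinarith [sq_nonneg (x - 2 * t), mul_nonneg (sub_nonneg.2 ht₁) (sub_nonneg.2 ht₂)]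
    calc ‖exp (-t ^ 2) * -(2 * t)‖ = 2 * (|t| * exp (-t ^ 2)) := by
          rw [norm_mul, norm_neg, norm_mul, norm_of_nonneg (exp_pos _).le, norm_two, norm_eq_abs]
          ring
      _ ≤ 2 * exp (-t ^ 2 / 2) := by gcongr; exact abs_mul_exp_neg_sq_le t
      _ ≤ 2 * exp (1 / 2 - x ^ 2 / 4) := by gcongr; linarith
  have hx : x ∈ Icc (x - 1) (x + 1) := ⟨by linarith, by linarith⟩
  have hxh : x + h ∈ Icc (x - 1) (x + 1) :=
    ⟨by linarith [neg_abs_le h], by linarith [le_abs_self h]⟩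
  simpa [norm_eq_abs] using
    (convex_Icc _ _).norm_image_sub_le_of_norm_hasDerivWithin_le hderiv hbound hx hxh

noncomputable def weightedGaussian (y : ℝ) : ℝ := (1 + |y|) * exp (-y ^ 2 / 2)

lemma weightedGaussian_nonneg (y : ℝ) : 0 ≤ weightedGaussian y := by
  unfold weightedGaussian; positivity

lemma integrable_weightedGaussian : Integrable weightedGaussian := by
  have hb : (0 : ℝ) < 1 / 2 := by norm_num
  refine ((integrable_exp_neg_mul_sq hb).add (integrable_mul_exp_neg_mul_sq hb).norm).congr
    (Filter.Eventually.of_forall fun y => ?_)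
  simp only [weightedGaussian, Pi.add_apply, norm_mul, norm_eq_abs, abs_of_pos (exp_pos _)]
  ring_nf

lemma abs_add_rpow_le {s : ℝ} (hs0 : 0 ≤ s) (hs1 : s ≤ 1) (y h : ℝ) :
    |y + h| ^ s ≤ (1 + |h|) ^ s * (1 + |y|) :=
  calc |y + h| ^ s ≤ ((1 + |h|) * (1 + |y|)) ^ s := by
        gcongr
        nlinarith [abs_add_le y h, abs_nonneg y, abs_nonneg h]
    _ = (1 + |h|) ^ s * (1 + |y|) ^ s := mul_rpow (by positivity) (by positivity)
    _ ≤ (1 + |h|) ^ s * (1 + |y|) := by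
        gcongr
        exact rpow_le_self_of_one_le (by linarith [abs_nonneg y]) hs1

lemma abs_rpow_le_one_add_abs {s : ℝ} (hs0 : 0 ≤ s) (hs1 : s ≤ 1) (x : ℝ) :
    |x| ^ s ≤ 1 + |x| := by
  simpa using abs_add_rpow_le hs0 hs1 x 0

lemma sq_abs_exp_neg_sq_add_sub_mul_rpow_le_of_abs_le_one {s : ℝ} (hs0 : 0 ≤ s) (hs1 : s ≤ 1)
    {x h : ℝ} (hh : |h| ≤ 1) :
    |exp (-(x + h) ^ 2) - exp (-x ^ 2)| ^ 2 * |x| ^ s ≤ 4 * exp 1 * h ^ 2 * weightedGaussian x :=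
  calc |exp (-(x + h) ^ 2) - exp (-x ^ 2)| ^ 2 * |x| ^ s
      ≤ (2 * exp (1 / 2 - x ^ 2 / 4) * |h|) ^ 2 * (1 + |x|) := by
        gcongr
        exacts [abs_exp_neg_sq_add_sub_le hh, abs_rpow_le_one_add_abs hs0 hs1 x]
    _ = 4 * exp 1 * h ^ 2 * weightedGaussian x := by
        have hexp : exp (1 / 2 - x ^ 2 / 4) ^ 2 = exp 1 * exp (-x ^ 2 / 2) := by
          rw [← exp_nat_mul, ← exp_add]; ring_nf
        rw [weightedGaussian, mul_pow, mul_pow, sq_abs, hexp]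
        ring

lemma sq_abs_exp_neg_sq_add_sub_mul_rpow_le {s : ℝ} (hs0 : 0 ≤ s) (hs1 : s ≤ 1) (x h : ℝ) :
    |exp (-(x + h) ^ 2) - exp (-x ^ 2)| ^ 2 * |x| ^ s ≤
      2 * (1 + |h|) ^ s * (weightedGaussian x + weightedGaussian (x + h)) := by
  have hsq : ∀ y : ℝ, exp (-y ^ 2) ^ 2 ≤ exp (-y ^ 2 / 2) := fun y => by
    rw [sq, ← exp_add]; gcongr; nlinarith [sq_nonneg y]
  have hx : |x| ^ s ≤ (1 + |h|) ^ s * (1 + |x|) :=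
    (abs_rpow_le_one_add_abs hs0 hs1 x).trans
      (le_mul_of_one_le_left (by positivity) (one_le_rpow (by simp) hs0))
  have hxh : |x| ^ s ≤ (1 + |h|) ^ s * (1 + |x + h|) := by
    simpa using abs_add_rpow_le hs0 hs1 (x + h) (-h)
  have hdiff : |exp (-(x + h) ^ 2) - exp (-x ^ 2)| ^ 2 ≤
      2 * exp (-x ^ 2) ^ 2 + 2 * exp (-(x + h) ^ 2) ^ 2 := by
    rw [sq_abs]; nlinarith [sq_nonneg (exp (-(x + h) ^ 2) + exp (-x ^ 2))]
  calc |exp (-(x + h) ^ 2) - exp (-x ^ 2)| ^ 2 * |x| ^ s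
      ≤ 2 * exp (-x ^ 2) ^ 2 * |x| ^ s + 2 * exp (-(x + h) ^ 2) ^ 2 * |x| ^ s := by
        rw [← add_mul]; gcongr
    _ ≤ 2 * exp (-x ^ 2 / 2) * ((1 + |h|) ^ s * (1 + |x|)) +
        2 * exp (-(x + h) ^ 2 / 2) * ((1 + |h|) ^ s * (1 + |x + h|)) := by
        gcongr <;> apply hsq
    _ = 2 * (1 + |h|) ^ s * (weightedGaussian x + weightedGaussian (x + h)) := by
        rw [weightedGaussian, weightedGaussian]; ring

lemma sq_abs_exp_neg_sq_add_sub_mul_rpow_le_min {s : ℝ} (hs0 : 0 ≤ s) (hs1 : s ≤ 1) (x h : ℝ) :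
    |exp (-(x + h) ^ 2) - exp (-x ^ 2)| ^ 2 * |x| ^ s ≤
      4 * exp 1 * (min 1 (h ^ 2) * (1 + |h|) ^ s) *
        (weightedGaussian x + weightedGaussian (x + h)) := by
  have hwx := weightedGaussian_nonneg x
  have hwxh := weightedGaussian_nonneg (x + h)
  rcases le_or_gt |h| 1 with hh | hh
  · rw [min_eq_right (by nlinarith [sq_abs h, abs_nonneg h])]
    have hs : 1 ≤ (1 + |h|) ^ s := one_le_rpow (by simp) hs0
    calc _ ≤ 4 * exp 1 * h ^ 2 * weightedGaussian x :=
          sq_abs_exp_neg_sq_add_sub_mul_rpow_le_of_abs_le_one hs0 hs1 hh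
      _ ≤ 4 * exp 1 * h ^ 2 *
            ((1 + |h|) ^ s * (weightedGaussian x + weightedGaussian (x + h))) := by
          gcongr; nlinarith
      _ = _ := by ring
  · rw [min_eq_left (by nlinarith [sq_abs h]), one_mul]
    refine (sq_abs_exp_neg_sq_add_sub_mul_rpow_le hs0 hs1 x h).trans ?_
    have : (2 : ℝ) ≤ 4 * exp 1 := by linarith [add_one_le_exp (1 : ℝ)]
    gcongr

theorem stmt1 (H θ : ℝ) (hH1 : 1 / 4 < H)
    (hθ0 : 0 < θ) (hθ1 : θ < 1 / 2 - H) :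
    Integrable (fun q : ℝ × ℝ =>
      |Real.exp (-(q.1 + q.2) ^ 2) - Real.exp (-q.1 ^ 2)| ^ 2 *
        |q.2| ^ (2 * H - 2) * |q.1| ^ (2 * θ)) := by
  have hs0 : 0 ≤ 2 * θ := by linarith
  have hs1 : 2 * θ ≤ 1 := by linarith
  have hφ := integrable_min_one_sq_mul_abs_rpow_mul_one_add_abs_rpow (a := 2 * H - 2)
    (by linarith) hs0 (by linarith)
  have hdom :=
    (integrable_prod_mul_add_comp_add hφ integrable_weightedGaussian).const_mul (4 * exp 1)
  rw [← Measure.volume_eq_prod] at hdom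
  refine hdom.mono' (by fun_prop) (Filter.Eventually.of_forall fun q => ?_)
  rw [norm_of_nonneg (by positivity), mul_right_comm]
  calc _ ≤ (4 * exp 1 * (min 1 (q.2 ^ 2) * (1 + |q.2|) ^ (2 * θ)) *
        (weightedGaussian q.1 + weightedGaussian (q.1 + q.2))) * |q.2| ^ (2 * H - 2) :=
        mul_le_mul_of_nonneg_right
          (sq_abs_exp_neg_sq_add_sub_mul_rpow_le_min hs0 hs1 q.1 q.2) (by positivity)
    _ = _ := by ring
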